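/- arXiv:2101.12006 — 6 statements merged into one kernel-verified Lean document; each statement's English description precedes it below -/
import Mathlib

section
/- The function g(x) = -tanh(x) + x(1 - tanh(x)^2) is strictly decreasing on (0, ∞), since its derivative equals -2 x tanh(x)(1 - tanh(x)^2), which is negative for x > 0. -/
open Real

namespace Real

theorem hasDerivAt_tanh (x : ℝ) : HasDerivAt tanh (1 - tanh x ^ 2) x := by
  have hcosh : cosh x ≠ 0 := (cosh_pos x).ne'
  have hquot : HasDerivAt (fun y => sinh y / cosh y)
      ((cosh x * cosh x - sinh x * sinh x) / cosh x ^ 2) x :=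
    (hasDerivAt_sinh x).div (hasDerivAt_cosh x) hcosh
  simp only [← tanh_eq_sinh_div_cosh] at hquot
  convert hquot using 1
  rw [tanh_eq_sinh_div_cosh]
  field_simp

theorem tanh_pos {x : ℝ} (hx : 0 < x) : 0 < tanh x := by
  rw [tanh_eq_sinh_div_cosh]
  exact div_pos (sinh_pos_iff.2 hx) (cosh_pos x)

end Real

theorem hasDerivAt_neg_tanh_add_mul_one_sub_tanh_sq (x : ℝ) :
    HasDerivAt (fun x : ℝ => -tanh x + x * (1 - tanh x ^ 2))
      (-2 * x * tanh x * (1 - tanh x ^ 2)) x := by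
  have hsech := (hasDerivAt_const x (1 : ℝ)).sub ((hasDerivAt_tanh x).pow 2)
  refine ((hasDerivAt_tanh x).neg.add ((hasDerivAt_id' x).mul hsech)).congr_deriv ?_
  norm_num
  ring

theorem mul_tanh_mul_one_sub_tanh_sq_pos {x : ℝ} (hx : 0 < x) :
    0 < x * tanh x * (1 - tanh x ^ 2) :=
  mul_pos (mul_pos hx (tanh_pos hx)) (sub_pos.2 (tanh_sq_lt_one x))

/-- The function `g(x) = -tanh x + x (1 - tanh² x)` is strictly decreasing on `(0, ∞)`:
its derivative equals `-2 x tanh x (1 - tanh² x)`, which is negative for `x > 0`. -/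
theorem g_strictAntiOn_deriv :
    StrictAntiOn (fun x : ℝ => -Real.tanh x + x * (1 - Real.tanh x ^ 2)) (Set.Ioi 0) ∧
    (∀ x : ℝ, HasDerivAt (fun x : ℝ => -Real.tanh x + x * (1 - Real.tanh x ^ 2))
      (-2 * x * Real.tanh x * (1 - Real.tanh x ^ 2)) x) ∧
    (∀ x : ℝ, 0 < x → -2 * x * Real.tanh x * (1 - Real.tanh x ^ 2) < 0) := by
  have hderiv_neg : ∀ x : ℝ, 0 < x → -2 * x * tanh x * (1 - tanh x ^ 2) < 0 := fun x hx => by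
    linarith [mul_tanh_mul_one_sub_tanh_sq_pos hx]
  refine ⟨?_, hasDerivAt_neg_tanh_add_mul_one_sub_tanh_sq, hderiv_neg⟩
  refine strictAntiOn_of_hasDerivWithinAt_neg (convex_Ioi 0)
    (fun x _ => (hasDerivAt_neg_tanh_add_mul_one_sub_tanh_sq x).continuousAt.continuousWithinAt)
    (fun x _ => (hasDerivAt_neg_tanh_add_mul_one_sub_tanh_sq x).hasDerivWithinAt) ?_
  rw [interior_Ioi]
  exact hderiv_neg
end

section
/- Fix g, h > 0. For an integer j ≠ 0 let G_j = |j| tanh(h|j|) (or G_j = |j| if h = ∞) and ω_j(γ) = sqrt( g G_j + (γ G_j/(2j))² ). Then ω_j(γ) = sqrt(g) |j|^{1/2} + c_j(γ)/(sqrt(g)|j|^{1/2}), where c_j(γ) = [ g|j|(G_j/|j| - 1) + (γ G_j/(2|j|))² ] / [ 1 + sqrt( G_j/|j| + (1/(g|j|))(γ G_j/(2|j|))² ) ], and for every n ∈ ℕ there is a constant C_{n,h} with sup over j ≠ 0 and γ ∈ [γ_1, γ_2] of |∂_γ^n c_j(γ)| ≤ C_{n,h}. -/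
private lemma freq_tanh_pos {x : ℝ} (hx : 0 < x) : 0 < Real.tanh x := by
  rw [Real.tanh_eq_sinh_div_cosh]
  exact div_pos (Real.sinh_pos_iff.mpr hx) (Real.cosh_pos x)

private lemma freq_tanh_le_one (x : ℝ) : Real.tanh x ≤ 1 := by
  rw [Real.tanh_eq_sinh_div_cosh, div_le_one (Real.cosh_pos x)]
  nlinarith [Real.cosh_sub_sinh x, Real.exp_pos (-x)]

private lemma freq_mul_one_sub_tanh_le {x : ℝ} (hx : 0 ≤ x) :
    x * (1 - Real.tanh x) ≤ 1 := by
  have hc := Real.cosh_pos x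
  have h1 : Real.cosh x - Real.sinh x = Real.exp (-x) := Real.cosh_sub_sinh x
  have h2 : Real.cosh x = (Real.exp x + Real.exp (-x)) / 2 := Real.cosh_eq x
  have hex : Real.exp (-x) * Real.exp x = 1 := by
    rw [← Real.exp_add]; simp
  have hge : x + 1 ≤ Real.exp x := Real.add_one_le_exp x
  have hpos : 0 < Real.exp x := Real.exp_pos x
  have hpos' : 0 < Real.exp (-x) := Real.exp_pos _
  have hsq : (x + 1) * (x + 1) ≤ Real.exp x * Real.exp x :=
    mul_le_mul hge hge (by linarith) hpos.le
  have h3 : 1 - Real.tanh x = Real.exp (-x) / Real.cosh x := by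
    rw [Real.tanh_eq_sinh_div_cosh]
    field_simp
    exact h1
  rw [h3, ← mul_div_assoc, div_le_one hc]
  nlinarith [sq_nonneg x]

private lemma freq_sqrt_frac (A B : ℝ) (hA : 0 ≤ A) (hB : 0 < B) :
    (A - B) / (1 + Real.sqrt (A / B)) = Real.sqrt B * Real.sqrt A - B := by
  have ha : Real.sqrt A ^ 2 = A := Real.sq_sqrt hA
  have hb : Real.sqrt B ^ 2 = B := Real.sq_sqrt hB.le
  have hb0 : 0 < Real.sqrt B := Real.sqrt_pos.mpr hB
  have ha0 : 0 ≤ Real.sqrt A := Real.sqrt_nonneg A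
  rw [Real.sqrt_div hA]
  have hden : 1 + Real.sqrt A / Real.sqrt B = (Real.sqrt B + Real.sqrt A) / Real.sqrt B := by
    field_simp
  rw [hden, div_div_eq_mul_div, div_eq_iff (by positivity : Real.sqrt B + Real.sqrt A ≠ 0)]
  nlinarith

private lemma freq_phi_contDiff : ContDiff ℝ (⊤ : ℕ∞) (fun x : ℝ => Real.sqrt (1 + x ^ 2)) := by
  rw [contDiff_iff_contDiffAt]
  intro x
  have h : (1 : ℝ) + x ^ 2 ≠ 0 := by positivity
  exact (Real.contDiffAt_sqrt h).comp x
    ((contDiff_const.add (contDiff_id.pow 2)).contDiffAt)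

private lemma freq_phi_ge_one (x : ℝ) : 1 ≤ Real.sqrt (1 + x ^ 2) := by
  have := Real.sqrt_le_sqrt (show (1:ℝ) ≤ 1 + x ^ 2 by nlinarith [sq_nonneg x])
  simpa using this

private lemma freq_phi_le (x : ℝ) : Real.sqrt (1 + x ^ 2) ≤ 1 + x ^ 2 / 2 := by
  have h : (1 : ℝ) + x ^ 2 ≤ (1 + x ^ 2 / 2) ^ 2 := by nlinarith [sq_nonneg x, sq_nonneg (x^2)]
  calc Real.sqrt (1 + x ^ 2) ≤ Real.sqrt ((1 + x ^ 2 / 2) ^ 2) := Real.sqrt_le_sqrt h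
    _ = 1 + x ^ 2 / 2 := Real.sqrt_sq (by positivity)

private lemma freq_phi_deriv (x : ℝ) :
    deriv (fun x : ℝ => Real.sqrt (1 + x ^ 2)) x = x / Real.sqrt (1 + x ^ 2) := by
  have h : (0 : ℝ) < 1 + x ^ 2 := by positivity
  have h1 : HasDerivAt (fun x : ℝ => 1 + x ^ 2) (2 * x) x := by
    simpa using (hasDerivAt_pow 2 x).const_add 1
  have h2 : HasDerivAt (fun x : ℝ => Real.sqrt (1 + x ^ 2))
      (1 / (2 * Real.sqrt (1 + x ^ 2)) * (2 * x)) x :=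
    (Real.hasDerivAt_sqrt h.ne').comp x h1
  rw [h2.deriv]
  have hs : Real.sqrt (1 + x ^ 2) ≠ 0 := by positivity
  field_simp

private lemma freq_iteratedDeriv_affine {φ : ℝ → ℝ} (hφ : ContDiff ℝ (⊤ : ℕ∞) φ) (K k B : ℝ)
    {n : ℕ} (hn : 0 < n) (γ : ℝ) :
    iteratedDeriv n (fun x => K * φ (k * x) - B) γ
      = K * (k ^ n * iteratedDeriv n φ (k * γ)) := by
  have hφn : ContDiff ℝ n φ := hφ.of_le (by exact_mod_cast le_top)
  have hψ : ContDiff ℝ n (fun x : ℝ => φ (k * x)) :=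
    hφn.comp (contDiff_const.mul contDiff_id)
  calc iteratedDeriv n (fun x => K * φ (k * x) - B) γ
      = iteratedDeriv n (fun x => -B + K * φ (k * x)) γ := by
        congr 1; funext x; ring
    _ = iteratedDeriv n (fun x => K * φ (k * x)) γ := by
        simp only [← iteratedDerivWithin_univ]
        exact iteratedDerivWithin_const_add hn (-B)
    _ = K * iteratedDeriv n (fun x => φ (k * x)) γ := by
        simp only [← iteratedDerivWithin_univ]
        exact iteratedDerivWithin_const_mul (Set.mem_univ γ) uniqueDiffOn_univ K hψ.contDiffWithinAt
    _ = K * (k ^ n * iteratedDeriv n φ (k * γ)) := by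
        rw [iteratedDeriv_comp_const_mul hφn k]

set_option maxHeartbeats 1600000 in
/-- Asymptotics of the linear frequencies: with `G_j = |j| tanh (h |j|)` and
`ω_j(γ) = sqrt (g G_j + (γ G_j / (2j))²)`, one has
`ω_j(γ) = sqrt g |j|^{1/2} + c_j(γ) / (sqrt g |j|^{1/2})` with `c_j` explicit, and for each
`n ∈ ℕ` the derivatives `∂_γⁿ c_j(γ)` are bounded uniformly in `j ≠ 0` and `γ ∈ [γ₁, γ₂]`. -/
theorem frequency_asymptotics (g h γ₁ γ₂ : ℝ) (hg : 0 < g) (hh : 0 < h) :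
    let G : ℤ → ℝ := fun j => |(j : ℝ)| * Real.tanh (h * |(j : ℝ)|)
    let c : ℤ → ℝ → ℝ := fun j γ =>
      (g * |(j : ℝ)| * (G j / |(j : ℝ)| - 1) + (γ * G j / (2 * |(j : ℝ)|)) ^ 2) /
        (1 + Real.sqrt (G j / |(j : ℝ)| +
          (1 / (g * |(j : ℝ)|)) * (γ * G j / (2 * |(j : ℝ)|)) ^ 2))
    (∀ j : ℤ, j ≠ 0 → ∀ γ : ℝ,
        Real.sqrt (g * G j + (γ * G j / (2 * (j : ℝ))) ^ 2)
          = Real.sqrt g * Real.sqrt |(j : ℝ)| + c j γ / (Real.sqrt g * Real.sqrt |(j : ℝ)|)) ∧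
    (∀ n : ℕ, ∃ C : ℝ, 0 < C ∧ ∀ j : ℤ, j ≠ 0 → ∀ γ ∈ Set.Icc γ₁ γ₂,
        |iteratedDeriv n (c j) γ| ≤ C) := by
  intro G c
  have hGdef : ∀ j : ℤ, G j = |(j : ℝ)| * Real.tanh (h * |(j : ℝ)|) := fun _ => rfl
  have habs : ∀ j : ℤ, j ≠ 0 → (1 : ℝ) ≤ |(j : ℝ)| := by
    intro j hj
    have : (1 : ℤ) ≤ |j| := Int.one_le_abs hj
    exact_mod_cast this
  -- the key closed form for `c`
  have hc : ∀ j : ℤ, j ≠ 0 → ∀ γ : ℝ,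
      c j γ = Real.sqrt (g * |(j : ℝ)|) *
          Real.sqrt (g * G j + (γ * G j / (2 * |(j : ℝ)|)) ^ 2) - g * |(j : ℝ)| := by
    intro j hj γ
    have hj1 := habs j hj
    have hjpos : (0 : ℝ) < |(j : ℝ)| := lt_of_lt_of_le one_pos hj1
    have hj0 : |(j : ℝ)| ≠ 0 := ne_of_gt hjpos
    have hx : 0 < h * |(j : ℝ)| := mul_pos hh hjpos
    have hG0 : 0 < G j := by
      rw [hGdef j]; exact mul_pos hjpos (freq_tanh_pos hx)
    have hA : 0 ≤ g * G j + (γ * G j / (2 * |(j : ℝ)|)) ^ 2 :=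
      add_nonneg (mul_nonneg hg.le hG0.le) (sq_nonneg _)
    have hB : 0 < g * |(j : ℝ)| := mul_pos hg hjpos
    have hnum : g * |(j : ℝ)| * (G j / |(j : ℝ)| - 1) + (γ * G j / (2 * |(j : ℝ)|)) ^ 2
        = (g * G j + (γ * G j / (2 * |(j : ℝ)|)) ^ 2) - g * |(j : ℝ)| := by
      field_simp
      ring
    have hden : G j / |(j : ℝ)| + (1 / (g * |(j : ℝ)|)) * (γ * G j / (2 * |(j : ℝ)|)) ^ 2
        = (g * G j + (γ * G j / (2 * |(j : ℝ)|)) ^ 2) / (g * |(j : ℝ)|) := by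
      field_simp
    have e1 : c j γ =
        (g * |(j : ℝ)| * (G j / |(j : ℝ)| - 1) + (γ * G j / (2 * |(j : ℝ)|)) ^ 2) /
          (1 + Real.sqrt (G j / |(j : ℝ)| +
            (1 / (g * |(j : ℝ)|)) * (γ * G j / (2 * |(j : ℝ)|)) ^ 2)) := rfl
    rw [e1, hnum, hden, freq_sqrt_frac _ _ hA hB]
  constructor
  · -- part 1
    intro j hj γ
    have hj1 := habs j hj
    have hjpos : (0 : ℝ) < |(j : ℝ)| := lt_of_lt_of_le one_pos hj1
    have hB : 0 < g * |(j : ℝ)| := mul_pos hg hjpos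
    have hb0 : 0 < Real.sqrt (g * |(j : ℝ)|) := Real.sqrt_pos.mpr hB
    have hsq : (γ * G j / (2 * (j : ℝ))) ^ 2 = (γ * G j / (2 * |(j : ℝ)|)) ^ 2 := by
      rw [div_pow, div_pow]
      congr 1
      rw [mul_pow, mul_pow, sq_abs]
    have hgB : Real.sqrt g * Real.sqrt |(j : ℝ)| = Real.sqrt (g * |(j : ℝ)|) :=
      (Real.sqrt_mul hg.le _).symm
    rw [hsq, hc j hj γ, hgB]
    have e2 : (Real.sqrt (g * |(j : ℝ)|) *
          Real.sqrt (g * G j + (γ * G j / (2 * |(j : ℝ)|)) ^ 2) - g * |(j : ℝ)|) /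
          Real.sqrt (g * |(j : ℝ)|)
        = Real.sqrt (g * G j + (γ * G j / (2 * |(j : ℝ)|)) ^ 2)
          - Real.sqrt (g * |(j : ℝ)|) := by
      rw [sub_div, mul_div_cancel_left₀ _ hb0.ne', Real.div_sqrt]
    rw [e2]
    ring
  · -- part 2
    intro n
    obtain ⟨Γ, hΓdef⟩ : ∃ x : ℝ, x = |γ₁| + |γ₂| := ⟨_, rfl⟩
    have hΓ0 : 0 ≤ Γ := by rw [hΓdef]; positivity
    have hγmem : ∀ γ ∈ Set.Icc γ₁ γ₂, |γ| ≤ Γ := by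
      rintro γ ⟨h1, h2⟩
      rw [abs_le]
      constructor
      · have := neg_abs_le γ₁; have := abs_nonneg γ₂; simp only [hΓdef]; linarith
      · have := le_abs_self γ₂; have := abs_nonneg γ₁; simp only [hΓdef]; linarith
    have hsg : 0 < Real.sqrt g := Real.sqrt_pos.mpr hg
    obtain ⟨R, hRdef⟩ : ∃ x : ℝ, x = Γ / (2 * Real.sqrt g) := ⟨_, rfl⟩
    obtain ⟨q, hqdef⟩ : ∃ x : ℝ, x = 1 + 1 / (2 * Real.sqrt g) := ⟨_, rfl⟩
    have hq1 : (1 : ℝ) ≤ q := by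
      have : 0 < 1 / (2 * Real.sqrt g) := by positivity
      simp only [hqdef]; linarith
    obtain ⟨M, hM⟩ : ∃ M : ℝ, ∀ x ∈ Set.Icc (-R) R,
        |iteratedDeriv n (fun y : ℝ => Real.sqrt (1 + y ^ 2)) x| ≤ M := by
      obtain ⟨M, hM⟩ := (isCompact_Icc (a := -R) (b := R)).exists_bound_of_continuousOn
        ((ContDiff.continuous_iteratedDeriv n freq_phi_contDiff (by exact_mod_cast le_top)).continuousOn)
      exact ⟨M, fun x hx => by simpa [Real.norm_eq_abs] using hM x hx⟩
    have hq0 : 0 ≤ q := by linarith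
    have hextra : 0 ≤ (1 / 4) * q ^ n * (|M| + 1) :=
      mul_nonneg (mul_nonneg (by norm_num) (pow_nonneg hq0 n)) (by positivity)
    refine ⟨Γ ^ 2 / 8 + g / h + Γ / 4 + (1 / 4) * q ^ n * (|M| + 1) + 1, by
      have hb1 : 0 ≤ Γ ^ 2 / 8 := by positivity
      have hb2 : 0 < g / h := by positivity
      linarith, ?_⟩
    intro j hj γ hγ
    have hγΓ : |γ| ≤ Γ := hγmem γ hγ
    have hγ2 : γ ^ 2 ≤ Γ ^ 2 := by
      rw [← sq_abs]; exact pow_le_pow_left₀ (abs_nonneg γ) hγΓ 2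
    have hj1 := habs j hj
    have hjpos : (0 : ℝ) < |(j : ℝ)| := lt_of_lt_of_le one_pos hj1
    have hx : 0 < h * |(j : ℝ)| := mul_pos hh hjpos
    obtain ⟨t, htdef⟩ : ∃ x : ℝ, x = Real.tanh (h * |(j : ℝ)|) := ⟨_, rfl⟩
    have ht0 : 0 < t := htdef ▸ freq_tanh_pos hx
    have ht1 : t ≤ 1 := htdef ▸ freq_tanh_le_one _
    have hGj : G j = |(j : ℝ)| * t := by rw [hGdef j, htdef]
    have hGpos : 0 < G j := by rw [hGj]; positivity
    obtain ⟨s, hsdef⟩ : ∃ x : ℝ, x = Real.sqrt (g * |(j : ℝ)|) := ⟨_, rfl⟩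
    obtain ⟨u, hudef⟩ : ∃ x : ℝ, x = Real.sqrt (g * G j) := ⟨_, rfl⟩
    obtain ⟨τ, hτdef⟩ : ∃ x : ℝ, x = Real.sqrt t := ⟨_, rfl⟩
    have hs0 : 0 < s := hsdef ▸ Real.sqrt_pos.mpr (mul_pos hg hjpos)
    have hu0 : 0 < u := hudef ▸ Real.sqrt_pos.mpr (mul_pos hg hGpos)
    have hτ0 : 0 < τ := hτdef ▸ Real.sqrt_pos.mpr ht0
    have hτ1 : τ ≤ 1 := by rw [hτdef]; exact Real.sqrt_le_one.mpr ht1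
    have hsgs : Real.sqrt g ≤ s := by
      rw [hsdef]; exact Real.sqrt_le_sqrt (le_mul_of_one_le_right hg.le hj1)
    have hs2 : s ^ 2 = g * |(j : ℝ)| := by rw [hsdef]; exact Real.sq_sqrt (by positivity)
    have hu2 : u ^ 2 = g * G j := by rw [hudef]; exact Real.sq_sqrt (mul_nonneg hg.le hGpos.le)
    have hτ2 : τ ^ 2 = t := by rw [hτdef]; exact Real.sq_sqrt ht0.le
    have hus : u = s * τ := by
      have e : g * G j = (g * |(j : ℝ)|) * t := by rw [hGj]; ring
      rw [hudef, e, Real.sqrt_mul (by positivity), ← hsdef, ← hτdef]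
    obtain ⟨k, hkdef⟩ : ∃ x : ℝ, x = τ / (2 * s) := ⟨_, rfl⟩
    obtain ⟨K, hKdef⟩ : ∃ x : ℝ, x = s * u := ⟨_, rfl⟩
    have hk0 : 0 < k := by rw [hkdef]; positivity
    have hK0 : 0 < K := hKdef ▸ mul_pos hs0 hu0
    have hkle : k ≤ 1 / (2 * Real.sqrt g) := by
      rw [hkdef]
      exact div_le_div₀ zero_le_one hτ1 (by positivity) (by linarith)
    have hKk2 : K * k ^ 2 = τ ^ 3 / 4 := by
      rw [hKdef, hkdef, hus]; field_simp; ring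
    have hKk2le : K * k ^ 2 ≤ 1 / 4 := by
      have h9 : τ ^ 3 ≤ 1 := pow_le_one₀ hτ0.le hτ1
      rw [hKk2]; linarith
    have hk2 : k ^ 2 = t / (4 * (g * |(j : ℝ)|)) := by
      rw [hkdef, div_pow, mul_pow, hτ2, hs2]; norm_num
    have hAeq : ∀ γ' : ℝ, g * G j + (γ' * G j / (2 * |(j : ℝ)|)) ^ 2
        = (g * G j) * (1 + (k * γ') ^ 2) := by
      intro γ'
      rw [mul_pow, hk2, hGj]
      field_simp
      ring
    have hfun : c j = fun γ' : ℝ =>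
        K * Real.sqrt (1 + (k * γ') ^ 2) - g * |(j : ℝ)| := by
      funext γ'
      rw [hc j hj γ', hAeq γ', Real.sqrt_mul (mul_nonneg hg.le hGpos.le), ← hudef, ← hsdef,
        hKdef]
      ring
    rcases Nat.eq_zero_or_pos n with hn0 | hnpos
    · -- n = 0
      subst hn0
      have e0 : c j γ = K * Real.sqrt (1 + (k * γ) ^ 2) - g * |(j : ℝ)| := by rw [hfun]
      rw [iteratedDeriv_zero, e0]
      have hφ1 : 1 ≤ Real.sqrt (1 + (k * γ) ^ 2) := freq_phi_ge_one _
      have hφle : Real.sqrt (1 + (k * γ) ^ 2) ≤ 1 + (k * γ) ^ 2 / 2 := freq_phi_le _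
      have h1 : 0 ≤ K * (Real.sqrt (1 + (k * γ) ^ 2) - 1) :=
        mul_nonneg hK0.le (by linarith)
      have h2 : K * (Real.sqrt (1 + (k * γ) ^ 2) - 1) ≤ Γ ^ 2 / 8 := by
        have e : K * ((k * γ) ^ 2 / 2) = (K * k ^ 2) * γ ^ 2 / 2 := by ring
        have b1 : K * (Real.sqrt (1 + (k * γ) ^ 2) - 1) ≤ (K * k ^ 2) * γ ^ 2 / 2 := by
          have b0 : K * (Real.sqrt (1 + (k * γ) ^ 2) - 1) ≤ K * ((k * γ) ^ 2 / 2) :=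
            mul_le_mul_of_nonneg_left (by linarith) hK0.le
          linarith [e ▸ b0]
        have b2 : (K * k ^ 2) * γ ^ 2 ≤ (1 / 4) * Γ ^ 2 := by
          have := mul_le_mul hKk2le hγ2 (sq_nonneg γ) (by norm_num)
          linarith
        linarith
      have hust : u ≤ s := by
        calc u = s * τ := hus
          _ ≤ s * 1 := mul_le_mul_of_nonneg_left hτ1 hs0.le
          _ = s := mul_one s
      have h3 : 0 ≤ g * |(j : ℝ)| - K := by
        have : K ≤ s * s := by rw [hKdef]; exact mul_le_mul_of_nonneg_left hust hs0.le
        have e0 : s * s = g * |(j : ℝ)| := by rw [← hs2]; ring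
        linarith
      have h4 : g * |(j : ℝ)| - K ≤ g / h := by
        have h5 : s * (s - u) ≤ s ^ 2 - u ^ 2 := by
          have e5 : s ^ 2 - u ^ 2 - s * (s - u) = u * (s - u) := by ring
          linarith [mul_nonneg hu0.le (sub_nonneg.mpr hust), e5]
        have h6 : s ^ 2 - u ^ 2 = g * |(j : ℝ)| * (1 - t) := by
          rw [hs2, hu2, hGj]; ring
        have h7 : h * |(j : ℝ)| * (1 - t) ≤ 1 := by
          rw [htdef]; exact freq_mul_one_sub_tanh_le hx.le
        have h8 : g * |(j : ℝ)| - K = s * (s - u) := by rw [hKdef, ← hs2]; ring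
        rw [h8, le_div_iff₀ hh]
        have b5 : s * (s - u) * h ≤ (g * |(j : ℝ)| * (1 - t)) * h := by
          have := mul_le_mul_of_nonneg_right (le_of_le_of_eq h5 h6) hh.le
          linarith
        have e9 : (g * |(j : ℝ)| * (1 - t)) * h = g * (h * |(j : ℝ)| * (1 - t)) := by ring
        have b6 : g * (h * |(j : ℝ)| * (1 - t)) ≤ g * 1 :=
          mul_le_mul_of_nonneg_left h7 hg.le
        calc s * (s - u) * h ≤ g * (h * |(j : ℝ)| * (1 - t)) := by linarith [e9 ▸ b5]
          _ ≤ g := by linarith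
      have e3 : K * Real.sqrt (1 + (k * γ) ^ 2) - g * |(j : ℝ)|
          = K * (Real.sqrt (1 + (k * γ) ^ 2) - 1) - (g * |(j : ℝ)| - K) := by ring
      rw [e3, abs_le]
      have hΓ4 : 0 ≤ Γ / 4 := by rw [hΓdef]; positivity
      have hgh : 0 ≤ g / h := by positivity
      have hΓ8 : 0 ≤ Γ ^ 2 / 8 := by positivity
      constructor
      · linarith [hextra]
      · linarith [hextra]
    · -- n ≥ 1
      have heq : iteratedDeriv n (c j) γ
          = K * (k ^ n * iteratedDeriv n (fun y : ℝ => Real.sqrt (1 + y ^ 2)) (k * γ)) := by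
        rw [hfun]
        exact freq_iteratedDeriv_affine freq_phi_contDiff K k (g * |(j : ℝ)|) hnpos γ
      rw [heq, abs_mul, abs_mul, abs_of_pos hK0, abs_of_pos (pow_pos hk0 n)]
      set D : ℝ := |iteratedDeriv n (fun y : ℝ => Real.sqrt (1 + y ^ 2)) (k * γ)| with hDdef
      have hD0 : 0 ≤ D := abs_nonneg _
      have hΓ8 : 0 ≤ Γ ^ 2 / 8 := by positivity
      have hgh : 0 ≤ g / h := by positivity
      have hΓ4 : 0 ≤ Γ / 4 := by linarith
      rcases eq_or_lt_of_le (show 1 ≤ n from hnpos) with hn1 | hn2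
      · -- n = 1
        have hn1' : n = 1 := hn1.symm
        subst hn1'
        have hD : D ≤ k * |γ| := by
          rw [hDdef, iteratedDeriv_one, freq_phi_deriv, abs_div]
          have hφ1 : 1 ≤ Real.sqrt (1 + (k * γ) ^ 2) := freq_phi_ge_one _
          have : |Real.sqrt (1 + (k * γ) ^ 2)| = Real.sqrt (1 + (k * γ) ^ 2) :=
            abs_of_pos (lt_of_lt_of_le one_pos hφ1)
          rw [this, abs_mul, abs_of_pos hk0]
          exact div_le_self (by positivity) hφ1
        have step : K * (k ^ 1 * D) ≤ Γ / 4 := by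
          have b1 : K * (k ^ 1 * D) ≤ K * (k ^ 1 * (k * |γ|)) := by
            apply mul_le_mul_of_nonneg_left _ hK0.le
            apply mul_le_mul_of_nonneg_left hD (by positivity)
          have b2 : K * (k ^ 1 * (k * |γ|)) = (K * k ^ 2) * |γ| := by ring
          have b3 : (K * k ^ 2) * |γ| ≤ (1 / 4) * Γ :=
            mul_le_mul hKk2le hγΓ (abs_nonneg γ) (by norm_num)
          linarith
        linarith [hextra]
      · -- n ≥ 2
        obtain ⟨m, rfl⟩ : ∃ m : ℕ, n = m + 2 := ⟨n - 2, by omega⟩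
        have hmem : k * γ ∈ Set.Icc (-R) R := by
          have habs' : |k * γ| ≤ R := by
            rw [abs_mul, abs_of_pos hk0]
            calc k * |γ| ≤ (1 / (2 * Real.sqrt g)) * Γ :=
                  mul_le_mul hkle hγΓ (abs_nonneg γ) (by positivity)
              _ = R := by rw [hRdef]; ring
          exact abs_le.mp habs'
        have hDM : D ≤ |M| + 1 := by
          have := hM _ hmem
          have := le_abs_self M
          rw [hDdef]
          linarith
        have hkq : k ≤ q := by
          have : 0 < 1 / (2 * Real.sqrt g) := by positivity
          simp only [hqdef]; linarith
        have hkm : k ^ m ≤ q ^ (m + 2) := by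
          calc k ^ m ≤ q ^ m := pow_le_pow_left₀ hk0.le hkq m
            _ ≤ q ^ (m + 2) := pow_le_pow_right₀ hq1 (by omega)
        have step : K * (k ^ (m + 2) * D) ≤ (1 / 4) * q ^ (m + 2) * (|M| + 1) := by
          have e : K * (k ^ (m + 2) * D) = (K * k ^ 2) * (k ^ m * D) := by ring
          have b1 : k ^ m * D ≤ q ^ (m + 2) * (|M| + 1) :=
            mul_le_mul hkm hDM hD0 (by positivity)
          have b2 : (K * k ^ 2) * (k ^ m * D) ≤ (1 / 4) * (q ^ (m + 2) * (|M| + 1)) :=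
            mul_le_mul hKk2le b1 (by positivity) (by norm_num)
          linarith
        linarith
end

section
/- Let Ω : [γ_1, γ_2] → ℝ^N be real analytic on an open interval containing [γ_1, γ_2]. Suppose that for every c ∈ ℝ^N \ {0} the function γ ↦ Ω(γ)·c is not identically zero on [γ_1, γ_2] (non-degeneracy). Then there exist m_0 ∈ ℕ and ρ_0 > 0 such that for every γ ∈ [γ_1, γ_2] and every ℓ ∈ ℤ^N \ {0}: max_{0 ≤ n ≤ m_0} |∂_γ^n (Ω(γ)·ℓ)| ≥ ρ_0 ⟨ℓ⟩, where ⟨ℓ⟩ = max{1,|ℓ|}. -/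
/-!
For `c` on the `ℓ¹` unit sphere and `γ ∈ [γ₁, γ₂]`, some derivative of `t ↦ Ω(t)·c` is nonzero
at `γ`: otherwise this analytic function would vanish near `γ`, hence on the whole interval,
contradicting non-degeneracy. The sphere times the interval is compact, and the sets where one of
the first `m` derivatives is nonzero form an increasing open cover of it, so a single `m₀` works and
the largest of the first `m₀ + 1` derivatives is bounded below by some `ρ₀ > 0`. As
`c ↦ ∂ⁿ(Ω·c)` is linear, this scales to the bound `ρ₀ |ℓ|₁` for every `ℓ`, and `|ℓ|₁ ≥ 1` for a
nonzero integer vector `ℓ`.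
-/

open Set Topology

section Analytic

variable {𝕜 E : Type*} [NontriviallyNormedField 𝕜] [NormedAddCommGroup E] [NormedSpace 𝕜 E]
  [CompleteSpace E] {f : 𝕜 → E}

theorem AnalyticAt.eventually_eq_zero_of_forall_iteratedDeriv_eq_zero [CharZero 𝕜] {x : 𝕜}
    (hf : AnalyticAt 𝕜 f x) (h : ∀ n, iteratedDeriv n f x = 0) : ∀ᶠ z in 𝓝 x, f z = 0 :=
  analyticOrderAt_eq_top.1 <| ENat.eq_top_iff_forall_ge.2 fun _ =>
    (natCast_le_analyticOrderAt_iff_iteratedDeriv_eq_zero hf).2 fun i _ => h i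

theorem AnalyticOnNhd.exists_iteratedDeriv_ne_zero [CharZero 𝕜] {S : Set 𝕜}
    (hf : AnalyticOnNhd 𝕜 f S) (hS : IsPreconnected S) {x y : 𝕜} (hx : x ∈ S) (hy : y ∈ S)
    (hfy : f y ≠ 0) : ∃ n, iteratedDeriv n f x ≠ 0 := by
  by_contra! h
  exact hfy <| hf.eqOn_zero_of_preconnected_of_eventuallyEq_zero hS hx
    ((hf x hx).eventually_eq_zero_of_forall_iteratedDeriv_eq_zero h) hy

theorem AnalyticOnNhd.iteratedDeriv {S : Set 𝕜} (hf : AnalyticOnNhd 𝕜 f S) (n : ℕ) :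
    AnalyticOnNhd 𝕜 (iteratedDeriv n f) S := by
  simpa only [iteratedDeriv_eq_iterate] using hf.iterated_deriv n

end Analytic

theorem iteratedDeriv_dotProduct_const {𝕜 ι : Type*} [NontriviallyNormedField 𝕜] [Fintype ι]
    {f : 𝕜 → ι → 𝕜} {x : 𝕜} {n : ℕ} (hf : ∀ i, ContDiffAt 𝕜 n (f · i) x) (c : ι → 𝕜) :
    iteratedDeriv n (fun z => f z ⬝ᵥ c) x = (fun i => iteratedDeriv n (f · i) x) ⬝ᵥ c := by
  simp only [dotProduct]
  rw [iteratedDeriv_fun_sum fun i _ => (hf i).mul contDiffAt_const]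
  exact Finset.sum_congr rfl fun i _ => iteratedDeriv_mul_const_field (f · i) (c i)

section Compactness

variable {X E : Type*} [TopologicalSpace X] [NormedAddCommGroup E] {g : ℕ → X → E}

theorem exists_pos_forall_exists_le_norm [CompactSpace X] (hg : ∀ n, Continuous (g n))
    (h : ∀ x, ∃ n, g n x ≠ 0) : ∃ m : ℕ, ∃ ρ > 0, ∀ x, ∃ n ≤ m, ρ ≤ ‖g n x‖ := by
  let M (m : ℕ) (x : X) : ℝ :=
    (Finset.range (m + 1)).sup' Finset.nonempty_range_add_one fun n => ‖g n x‖
  have hM_cont (m : ℕ) : Continuous (M m) :=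
    Continuous.finset_sup'_apply _ fun n _ => (hg n).norm
  have le_M {m : ℕ} {a : ℝ} {x : X} : a ≤ M m x ↔ ∃ n ≤ m, a ≤ ‖g n x‖ := by
    simp only [M, Finset.le_sup'_iff, Finset.mem_range, Nat.lt_succ_iff]
  obtain ⟨m, hm⟩ := isCompact_univ.elim_directed_cover (fun m => {x | 0 < M m x})
    (fun m => isOpen_lt continuous_const (hM_cont m))
    (fun x _ => by
      obtain ⟨n, hn⟩ := h x
      exact mem_iUnion.2 ⟨n, (norm_pos_iff.2 hn).trans_le (le_M.2 ⟨n, le_rfl, le_rfl⟩)⟩)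
    (Monotone.directed_le fun m m' hmm' x (hx : 0 < M m x) =>
      hx.trans_le <| Finset.sup'_mono _ (Finset.range_subset_range.2 (by omega)) _)
  obtain ⟨ρ, hρ, hρM⟩ := isCompact_univ.exists_forall_le' (hM_cont m).continuousOn
    fun x _ => hm (mem_univ x)
  exact ⟨m, ρ, hρ, fun x => le_M.1 (hρM x (mem_univ x))⟩

theorem IsCompact.exists_pos_forall_exists_le_norm {K : Set X} (hK : IsCompact K)
    (hg : ∀ n, ContinuousOn (g n) K) (h : ∀ x ∈ K, ∃ n, g n x ≠ 0) :
    ∃ m : ℕ, ∃ ρ > 0, ∀ x ∈ K, ∃ n ≤ m, ρ ≤ ‖g n x‖ := by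
  have := isCompact_iff_compactSpace.1 hK
  obtain ⟨m, ρ, hρ, hm⟩ := _root_.exists_pos_forall_exists_le_norm
    (g := fun n (x : K) => g n x) (fun n => (hg n).domRestrict) fun x => h x x.2
  exact ⟨m, ρ, hρ, fun x hx => hm ⟨x, hx⟩⟩

end Compactness

section L1

variable {ι : Type*} [Fintype ι]

theorem isCompact_setOf_sum_abs_eq_one : IsCompact {c : ι → ℝ | ∑ i, |c i| = 1} := by
  convert (isCompact_sphere (0 : PiLp 1 fun _ : ι => ℝ) 1).image (PiLp.continuous_ofLp 1 _)
  ext c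
  simp only [mem_ofPred_eq, mem_image, mem_sphere_zero_iff_norm, PiLp.norm_eq_of_L1,
    Real.norm_eq_abs]
  exact ⟨fun hc => ⟨WithLp.toLp 1 c, hc, rfl⟩, fun ⟨_, hx, hxc⟩ => hxc ▸ hx⟩

theorem exists_mul_sum_abs_le_abs_dotProduct {v : ℕ → ι → ℝ} {m : ℕ} {ρ : ℝ}
    (h : ∀ c : ι → ℝ, ∑ i, |c i| = 1 → ∃ n ≤ m, ρ ≤ |v n ⬝ᵥ c|) (c : ι → ℝ) :
    ∃ n ≤ m, ρ * ∑ i, |c i| ≤ |v n ⬝ᵥ c| := by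
  set s := ∑ i, |c i|
  have hs0 : 0 ≤ s := Finset.sum_nonneg fun i _ => abs_nonneg (c i)
  obtain hs | hs := hs0.eq_or_lt
  · exact ⟨0, m.zero_le, by rw [← hs, mul_zero]; exact abs_nonneg _⟩
  have hunit : ∑ i, |(s⁻¹ • c) i| = 1 := by
    simp only [Pi.smul_apply, smul_eq_mul, abs_mul, abs_inv, ← Finset.mul_sum, abs_of_pos hs]
    exact inv_mul_cancel₀ hs.ne'
  obtain ⟨n, hn, hρ⟩ := h _ hunit
  rw [dotProduct_smul, smul_eq_mul, abs_mul, abs_inv, abs_of_pos hs, le_inv_mul_iff₀ hs] at hρ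
  exact ⟨n, hn, by linarith⟩

theorem one_le_sum_abs_intCast_of_ne_zero {ℓ : ι → ℤ} (hℓ : ℓ ≠ 0) : 1 ≤ ∑ i, |(ℓ i : ℝ)| := by
  obtain ⟨i, hi⟩ := Function.ne_iff.1 hℓ
  calc (1 : ℝ) ≤ |(ℓ i : ℝ)| := by exact_mod_cast Int.one_le_abs hi
    _ ≤ ∑ i, |(ℓ i : ℝ)| :=
      Finset.single_le_sum (f := fun i => |(ℓ i : ℝ)|) (fun i _ => abs_nonneg _) (Finset.mem_univ i)

end L1

section Nondegenerate

variable {ι : Type*} [Fintype ι] {Ω : ℝ → ι → ℝ} {S : Set ℝ}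

def NondegenerateOn (Ω : ℝ → ι → ℝ) (S : Set ℝ) : Prop :=
  ∀ c : ι → ℝ, c ≠ 0 → ∃ γ ∈ S, Ω γ ⬝ᵥ c ≠ 0

theorem NondegenerateOn.exists_iteratedDeriv_ne_zero (hnd : NondegenerateOn Ω S)
    (hS : IsPreconnected S) (hΩ : ∀ i, AnalyticOnNhd ℝ (Ω · i) S) {c : ι → ℝ} (hc : c ≠ 0)
    {γ : ℝ} (hγ : γ ∈ S) : ∃ n, iteratedDeriv n (fun t => Ω t ⬝ᵥ c) γ ≠ 0 := by
  obtain ⟨y, hy, hfy⟩ := hnd c hc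
  have hf : AnalyticOnNhd ℝ (fun t => ∑ i, Ω t i * c i) S :=
    Finset.analyticOnNhd_fun_sum _ fun i _ => (hΩ i).mul analyticOnNhd_const
  exact hf.exists_iteratedDeriv_ne_zero hS hγ hy hfy

theorem NondegenerateOn.exists_pos_forall_mul_sum_abs_le (hnd : NondegenerateOn Ω S)
    (hSc : IsCompact S) (hSp : IsPreconnected S) (hΩ : ∀ i, AnalyticOnNhd ℝ (Ω · i) S) :
    ∃ m : ℕ, ∃ ρ > 0, ∀ γ ∈ S, ∀ c : ι → ℝ,
      ∃ n ≤ m, ρ * ∑ i, |c i| ≤ |iteratedDeriv n (fun t => Ω t ⬝ᵥ c) γ| := by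
  have hderiv (n : ℕ) (c : ι → ℝ) {γ : ℝ} (hγ : γ ∈ S) :
      iteratedDeriv n (fun t => Ω t ⬝ᵥ c) γ = (fun i => iteratedDeriv n (Ω · i) γ) ⬝ᵥ c :=
    iteratedDeriv_dotProduct_const (fun i => (hΩ i γ hγ).contDiffAt) c
  let g (n : ℕ) (p : (ι → ℝ) × ℝ) : ℝ := (fun i => iteratedDeriv n (Ω · i) p.2) ⬝ᵥ p.1
  have hg_cont (n : ℕ) : ContinuousOn (g n) ({c | ∑ i, |c i| = 1} ×ˢ S) :=
    continuousOn_finsetSum _ fun i _ =>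
      (((hΩ i).iteratedDeriv n).continuousOn.comp continuousOn_snd fun _ hp => hp.2).mul
        ((continuous_apply i).comp continuous_fst).continuousOn
  have hg_ne : ∀ p ∈ {c | ∑ i, |c i| = 1} ×ˢ S, ∃ n, g n p ≠ 0 := by
    rintro ⟨c, γ⟩ ⟨hc, hγ⟩
    have hc0 : c ≠ 0 := fun h => by simp [h] at hc
    simpa only [g, hderiv _ c hγ] using hnd.exists_iteratedDeriv_ne_zero hSp hΩ hc0 hγ
  obtain ⟨m, ρ, hρ, hK⟩ :=
    (isCompact_setOf_sum_abs_eq_one.prod hSc).exists_pos_forall_exists_le_norm hg_cont hg_ne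
  refine ⟨m, ρ, hρ, fun γ hγ c => ?_⟩
  simp only [hderiv _ _ hγ]
  exact exists_mul_sum_abs_le_abs_dotProduct (fun c hc => hK (c, γ) ⟨hc, hγ⟩) c

end Nondegenerate

theorem transversality_of_nondegenerate_general (N : ℕ) (γ₁ γ₂ : ℝ)
    (Ω : ℝ → Fin N → ℝ) (U : Set ℝ)
    (hUIcc : Set.Icc γ₁ γ₂ ⊆ U)
    (hΩ : ∀ a, AnalyticOnNhd ℝ (fun γ => Ω γ a) U)
    (hnd : ∀ c : Fin N → ℝ, c ≠ 0 → ∃ γ ∈ Set.Icc γ₁ γ₂, (∑ a, Ω γ a * c a) ≠ 0) :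
    ∃ m₀ : ℕ, ∃ ρ₀ : ℝ, 0 < ρ₀ ∧
      ∀ γ ∈ Set.Icc γ₁ γ₂, ∀ ℓ : Fin N → ℤ, ℓ ≠ 0 →
        ∃ n ≤ m₀, ρ₀ * max 1 (∑ a, (|ℓ a| : ℝ))
          ≤ |iteratedDeriv n (fun γ => ∑ a, Ω γ a * (ℓ a : ℝ)) γ| := by
  have hnd' : NondegenerateOn Ω (Icc γ₁ γ₂) := hnd
  obtain ⟨m₀, ρ, hρ, hbound⟩ := hnd'.exists_pos_forall_mul_sum_abs_le isCompact_Icc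
    isPreconnected_Icc fun a => (hΩ a).mono hUIcc
  refine ⟨m₀, ρ, hρ, fun γ hγ ℓ hℓ => ?_⟩
  rw [max_eq_right (one_le_sum_abs_intCast_of_ne_zero hℓ)]
  exact hbound γ hγ fun a => (ℓ a : ℝ)

/-- Transversality from non-degeneracy: if `Ω : ℝ → ℝᴺ` is analytic on an open set containing
`[γ₁, γ₂]` and non-degenerate (for every `c ≠ 0` the map `γ ↦ Ω(γ)·c` is not identically zero
on `[γ₁, γ₂]`), then there are `m₀ ∈ ℕ` and `ρ₀ > 0` such that for all `γ ∈ [γ₁, γ₂]` and all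
`ℓ ∈ ℤᴺ \ {0}`, `max_{0 ≤ n ≤ m₀} |∂_γⁿ (Ω(γ)·ℓ)| ≥ ρ₀ ⟨ℓ⟩`. -/
theorem transversality_of_nondegenerate (N : ℕ) (γ₁ γ₂ : ℝ)
    (Ω : ℝ → Fin N → ℝ) (U : Set ℝ)
    (hU : IsOpen U) (hUIcc : Set.Icc γ₁ γ₂ ⊆ U)
    (hΩ : ∀ a, AnalyticOnNhd ℝ (fun γ => Ω γ a) U)
    (hnd : ∀ c : Fin N → ℝ, c ≠ 0 → ∃ γ ∈ Set.Icc γ₁ γ₂, (∑ a, Ω γ a * c a) ≠ 0) :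
    ∃ m₀ : ℕ, ∃ ρ₀ : ℝ, 0 < ρ₀ ∧
      ∀ γ ∈ Set.Icc γ₁ γ₂, ∀ ℓ : Fin N → ℤ, ℓ ≠ 0 →
        ∃ n ≤ m₀, ρ₀ * max 1 (∑ a, (|ℓ a| : ℝ))
          ≤ |iteratedDeriv n (fun γ => ∑ a, Ω γ a * (ℓ a : ℝ)) γ| :=
  transversality_of_nondegenerate_general N γ₁ γ₂ Ω U hUIcc hΩ hnd
end

section
/- Let f : [γ_1, γ_2] → ℝ be C^{m_0} with max_{0 ≤ n ≤ m_0} |∂_γ^n f(γ)| ≥ ρ for all γ ∈ [γ_1, γ_2] (uniform transversality). Then for every δ > 0 the measure of the sublevel set { γ ∈ [γ_1, γ_2] : |f(γ)| < δ } is bounded by C(m_0, ρ, f) δ^{1/m_0}, for a constant depending on m_0, ρ and the C^{m_0+1}-norm of f (Rüssmann's lemma). -/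
/-!
Near each point `z` take the first `n ≤ m₀` with `f⁽ⁿ⁾ z ≠ 0`. Taylor's theorem gives
`|f x| ≥ c |x - z|ⁿ ≥ c |x - z|^m₀` on a ball of radius `≤ 1` around `z`, so there the sublevel
set `{|f| < δ}` lies in a ball of radius `(δ / c)^(1/m₀)`. Finitely many such balls cover the
compact interval, and the local constants add up.
-/

open Set Filter Topology MeasureTheory Metric
open scoped NNReal ENNReal Nat

theorem IsCompact.exists_forall_measure_inter_le_mul {X ι : Type*} [TopologicalSpace X]
    [MeasurableSpace X] {μ : Measure X} {s : Set X} (hs : IsCompact s) {A : ι → Set X}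
    {g : ι → ℝ≥0∞} (hloc : ∀ z ∈ s, ∃ U ∈ 𝓝 z, ∃ K : ℝ≥0, ∀ i, μ (U ∩ A i) ≤ K * g i) :
    ∃ C : ℝ≥0, ∀ i, μ (s ∩ A i) ≤ C * g i := by
  choose! U hU K hK using hloc
  obtain ⟨t, hts, hst⟩ := hs.elim_nhds_subcover U hU
  refine ⟨∑ z ∈ t, K z, fun i => ?_⟩
  calc μ (s ∩ A i)
      ≤ μ (⋃ z ∈ t, U z ∩ A i) := by
        rw [← iUnion₂_inter]; exact measure_mono (inter_subset_inter_left _ hst)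
    _ ≤ ∑ z ∈ t, μ (U z ∩ A i) := measure_biUnion_finset_le t _
    _ ≤ ∑ z ∈ t, K z * g i := Finset.sum_le_sum fun z hz => hK z (hts z hz) i
    _ = (∑ z ∈ t, K z : ℝ≥0) * g i := by rw [ENNReal.ofNNReal_finsetSum, Finset.sum_mul]

theorem taylorWithinEval_univ_of_iteratedDeriv_eq_zero {E : Type*} [NormedAddCommGroup E]
    [NormedSpace ℝ E] {f : ℝ → E} {n : ℕ} {z : ℝ} (hz : ∀ k < n, iteratedDeriv k f z = 0)
    (x : ℝ) :
    taylorWithinEval f n univ z x = ((n ! : ℝ)⁻¹ * (x - z) ^ n) • iteratedDeriv n f z := by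
  rw [taylor_within_apply, Finset.sum_range_succ, iteratedDerivWithin_univ,
    Finset.sum_eq_zero fun k hk => by
      rw [iteratedDerivWithin_univ, hz k (Finset.mem_range.1 hk), smul_zero], zero_add]

theorem ContDiff.exists_pos_eventually_mul_pow_le_norm {E : Type*} [NormedAddCommGroup E]
    [NormedSpace ℝ E] {f : ℝ → E} {n : ℕ} {z : ℝ} (hf : ContDiff ℝ n f)
    (hz : ∀ k < n, iteratedDeriv k f z = 0) (hn : iteratedDeriv n f z ≠ 0) :
    ∃ c > 0, ∀ᶠ x in 𝓝 z, c * |x - z| ^ n ≤ ‖f x‖ := by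
  set a := ‖iteratedDeriv n f z‖ / (n ! : ℝ)
  have ha : 0 < a := by have := norm_pos_iff.2 hn; positivity
  refine ⟨a / 2, half_pos ha, ?_⟩
  filter_upwards [(taylor_isLittleO_univ hf).def (half_pos ha)] with x hx
  rw [taylorWithinEval_univ_of_iteratedDeriv_eq_zero hz, norm_pow, Real.norm_eq_abs] at hx
  have hleading : ‖((n ! : ℝ)⁻¹ * (x - z) ^ n) • iteratedDeriv n f z‖ = a * |x - z| ^ n := by
    simp only [norm_smul, norm_mul, norm_inv, norm_pow, Real.norm_eq_abs, Nat.abs_cast, a]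
    ring
  have := norm_sub_norm_le (((n ! : ℝ)⁻¹ * (x - z) ^ n) • iteratedDeriv n f z) (f x)
  rw [norm_sub_rev, hleading] at this
  linarith

theorem volume_ball_inter_sublevel_le {f : ℝ → ℝ} {z r c : ℝ} {n m : ℕ} (hc : 0 < c)
    (hr : r ≤ 1) (hnm : n ≤ m) (hf : ∀ x ∈ ball z r, c * |x - z| ^ n ≤ |f x|) (δ : ℝ) :
    volume (ball z r ∩ {x | |f x| < δ})
      ≤ ENNReal.ofReal (2 * c⁻¹ ^ ((1 : ℝ) / m)) * ENNReal.ofReal (δ ^ ((1 : ℝ) / m)) := by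
  rw [← ENNReal.ofReal_mul (by positivity), mul_assoc, ← Real.volume_ball z]
  refine measure_mono fun x ⟨hx, hfxδ⟩ => ?_
  have hfx : c * |x - z| ^ n < δ := (hf x hx).trans_lt hfxδ
  have hxz : |x - z| < r := by simpa [Real.dist_eq] using hx
  have hδ : 0 ≤ δ := le_trans (by positivity) hfx.le
  rw [mem_ball, Real.dist_eq, ← Real.mul_rpow (by positivity) hδ, inv_mul_eq_div]
  rcases m.eq_zero_or_pos with rfl | hm
  -- `(1 : ℝ) / 0 = 0`, so for `m = 0` the radius is `1 ≥ r`.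
  · simpa using hxz.trans_le hr
  have hpow : |x - z| ^ m < δ / c := by
    rw [lt_div_iff₀ hc]
    calc |x - z| ^ m * c ≤ |x - z| ^ n * c := mul_le_mul_of_nonneg_right
          (pow_le_pow_of_le_one (abs_nonneg _) (hxz.trans_le hr).le hnm) hc.le
      _ < δ := by linarith
  rw [one_div, Real.lt_rpow_inv_iff_of_pos (abs_nonneg _) (by positivity) (by positivity)]
  exact_mod_cast hpow

theorem ContDiff.exists_nhds_volume_sublevel_le {f : ℝ → ℝ} {m : ℕ} {z : ℝ}
    (hf : ContDiff ℝ m f) (h : ∃ n ≤ m, iteratedDeriv n f z ≠ 0) :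
    ∃ U ∈ 𝓝 z, ∃ K : ℝ≥0, ∀ δ : ℝ,
      volume (U ∩ {x | |f x| < δ}) ≤ K * ENNReal.ofReal (δ ^ ((1 : ℝ) / m)) := by
  classical
  obtain ⟨n₀, hn₀m, hn₀⟩ := h
  have hex : ∃ n, iteratedDeriv n f z ≠ 0 := ⟨n₀, hn₀⟩
  have hnm : Nat.find hex ≤ m := (Nat.find_le hn₀).trans hn₀m
  obtain ⟨c, hc, hev⟩ := (hf.of_le (by exact_mod_cast hnm)).exists_pos_eventually_mul_pow_le_norm
    (fun k hk => not_not.1 (Nat.find_min hex hk)) (Nat.find_spec hex)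
  obtain ⟨r, hr, hball⟩ := Metric.eventually_nhds_iff_ball.1 hev
  refine ⟨ball z (min r 1), ball_mem_nhds z (by positivity),
    (2 * c⁻¹ ^ ((1 : ℝ) / m)).toNNReal,
    volume_ball_inter_sublevel_le hc (min_le_right r 1) hnm fun x hx => ?_⟩
  simpa using hball x (ball_subset_ball (min_le_left r 1) hx)

/-- Rüssmann's lemma: if `f` is smooth enough and uniformly transversal on `[γ₁, γ₂]`
(`max_{0 ≤ n ≤ m₀} |∂_γⁿ f(γ)| ≥ ρ` for all `γ`), then for every `δ > 0` the sublevel set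
`{γ ∈ [γ₁, γ₂] : |f γ| < δ}` has measure at most `C δ^{1/m₀}`, for a constant `C` depending on
`m₀`, `ρ` and `f`. -/
theorem russmann_sublevel_estimate (m₀ : ℕ) (γ₁ γ₂ ρ : ℝ) (f : ℝ → ℝ)
    (hρ : 0 < ρ)
    (hf : ContDiff ℝ (m₀ + 1) f)
    (htrans : ∀ γ ∈ Set.Icc γ₁ γ₂, ∃ n ≤ m₀, ρ ≤ |iteratedDeriv n f γ|) :
    ∃ C : ℝ, 0 < C ∧ ∀ δ : ℝ, 0 < δ →
      MeasureTheory.volume {γ ∈ Set.Icc γ₁ γ₂ | |f γ| < δ}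
        ≤ ENNReal.ofReal (C * δ ^ ((1 : ℝ) / m₀)) := by
  have hnonzero : ∀ z ∈ Icc γ₁ γ₂, ∃ n ≤ m₀, iteratedDeriv n f z ≠ 0 := fun z hz =>
    (htrans z hz).imp fun n ⟨hn, hρn⟩ => ⟨hn, fun h0 => by
      rw [h0, abs_zero] at hρn; linarith⟩
  obtain ⟨C, hC⟩ := isCompact_Icc.exists_forall_measure_inter_le_mul (μ := volume)
    (A := fun δ : ℝ => {x | |f x| < δ}) (g := fun δ => ENNReal.ofReal (δ ^ ((1 : ℝ) / m₀)))
    fun z hz => (hf.of_le (by exact_mod_cast Nat.le_succ m₀)).exists_nhds_volume_sublevel_le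
      (hnonzero z hz)
  refine ⟨C + 1, by positivity, fun δ hδ => (hC δ).trans ?_⟩
  rw [ENNReal.ofReal_mul (by positivity), ← ENNReal.ofReal_coe_nnreal]
  gcongr
  linarith
end

section
/- Let m_1, m_2 ∈ ℝ, ω ∈ ℝ^ν, υ ∈ (0,1), τ ≥ 1. For the regularized inverses (ω·∂_φ + m_i ∂_x)_{ext}^{-1} defined on traveling-wave Fourier modes by multiplying u_{ℓ,j} by χ((ω·ℓ + m_i j) υ^{-1} ⟨ℓ⟩^τ)/(i(ω·ℓ + m_i j)), where χ is a smooth even cutoff vanishing for |ξ| ≤ 1/3 and equal to 1 for |ξ| ≥ 2/3, one has for all s ≥ 0 the Lipschitz estimate ||((ω·∂_φ + m_1 ∂_x)_{ext}^{-1} - (ω·∂_φ + m_2 ∂_x)_{ext}^{-1}) u||_s ≤ C υ^{-2} |m_1 - m_2| ||u||_{s + 2τ + 1}. -/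
-- deriv vanishes where function locally constant
lemma aux_deriv_zero_small (χ : ℝ → ℝ) (hχsmooth : ContDiff ℝ (⊤ : ℕ∞) χ)
    (hχ0 : ∀ ξ : ℝ, |ξ| ≤ 1 / 3 → χ ξ = 0) :
    ∀ ξ : ℝ, |ξ| ≤ 1 / 3 → deriv χ ξ = 0 := by
  have hopen : ∀ ξ : ℝ, ξ ∈ Set.Ioo (-(1/3) : ℝ) (1/3) → deriv χ ξ = 0 := by
    intro ξ hξ
    have h1 : χ =ᶠ[nhds ξ] (fun _ => (0:ℝ)) := by
      filter_upwards [Ioo_mem_nhds hξ.1 hξ.2] with y hy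
      exact hχ0 y (abs_le.2 ⟨hy.1.le, hy.2.le⟩)
    rw [h1.deriv_eq, deriv_const]
  have hcont : Continuous (deriv χ) := ((hχsmooth.of_le (by simp) : ContDiff ℝ 1 χ).continuous_deriv le_rfl)
  have hEq : Set.EqOn (deriv χ) (fun _ => (0:ℝ)) (closure (Set.Ioo (-(1/3) : ℝ) (1/3))) :=
    (Set.EqOn.closure (fun x hx => hopen x hx) hcont continuous_const)
  intro ξ hξ
  have : ξ ∈ closure (Set.Ioo (-(1/3) : ℝ) (1/3)) := by
    rw [closure_Ioo (by norm_num)]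
    exact ⟨(abs_le.1 hξ).1, (abs_le.1 hξ).2⟩
  exact hEq this

lemma aux_deriv_zero_large (χ : ℝ → ℝ)
    (hχ1 : ∀ ξ : ℝ, 2 / 3 ≤ |ξ| → χ ξ = 1) :
    ∀ ξ : ℝ, 1 < |ξ| → deriv χ ξ = 0 := by
  intro ξ hξ
  have h1 : χ =ᶠ[nhds ξ] (fun _ => (1:ℝ)) := by
    have : Set.Ioi (2/3 : ℝ) ∪ Set.Iio (-(2/3) : ℝ) ∈ nhds ξ := by
      rcases lt_or_ge ξ 0 with h | h
      · refine Filter.mem_of_superset (Iio_mem_nhds ?_) Set.subset_union_right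
        have := abs_of_neg h ▸ hξ; linarith [abs_of_neg h, hξ]
      · refine Filter.mem_of_superset (Ioi_mem_nhds ?_) Set.subset_union_left
        have := abs_of_nonneg h ▸ hξ; linarith [abs_of_nonneg h]
    filter_upwards [this] with y hy
    rcases hy with hy | hy
    · exact hχ1 y (le_abs.2 (Or.inl hy.le))
    · exact hχ1 y (by rw [abs_of_neg (by simpa using hy.trans (by norm_num))]; linarith [Set.mem_Iio.1 hy])
  rw [h1.deriv_eq, deriv_const]

lemma aux_global_bound (f : ℝ → ℝ) (hf : Continuous f) (M : ℝ) (hM : 0 ≤ M)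
    (h : ∀ ξ : ℝ, 1 < |ξ| → |f ξ| ≤ M) : ∃ B : ℝ, 0 ≤ B ∧ ∀ ξ, |f ξ| ≤ B := by
  obtain ⟨x, -, hx⟩ := (isCompact_Icc (a := (-1:ℝ)) (b := 1)).exists_isMaxOn
    ⟨-1, by norm_num⟩ (hf.abs.continuousOn)
  refine ⟨max M (|f x|), le_trans hM (le_max_left _ _), fun ξ => ?_⟩
  rcases le_or_gt |ξ| 1 with hξ | hξ
  · exact le_max_of_le_right (hx ⟨(abs_le.1 hξ).1, (abs_le.1 hξ).2⟩)
  · exact le_max_of_le_left (h ξ hξ)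

lemma aux_lip (χ : ℝ → ℝ) (hχsmooth : ContDiff ℝ (⊤ : ℕ∞) χ)
    (hχ0 : ∀ ξ : ℝ, |ξ| ≤ 1/3 → χ ξ = 0)
    (B₀ B₁ : ℝ) (hB₀ : ∀ ξ, |χ ξ| ≤ B₀) (hB₁ : ∀ ξ, |deriv χ ξ| ≤ B₁)
    (hd0 : ∀ ξ : ℝ, |ξ| ≤ 1/3 → deriv χ ξ = 0)
    (c : ℝ) (hc : 0 < c) (x y : ℝ) :
    |χ (x*c)/x - χ (y*c)/y| ≤ ((3*B₁+9*B₀)*c^2) * |x - y| := by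
  have hB₀0 : 0 ≤ B₀ := le_trans (abs_nonneg _) (hB₀ 0)
  have hB₁0 : 0 ≤ B₁ := le_trans (abs_nonneg _) (hB₁ 0)
  set h' : ℝ → ℝ := fun t => if t = 0 then 0 else deriv χ (t*c) * c / t - χ (t*c)/t^2 with hh'
  have hderiv : ∀ t : ℝ, HasDerivAt (fun t => χ (t*c)/t) (h' t) t := by
    intro t
    by_cases ht : t = 0
    · subst ht
      have : (fun t => χ (t*c)/t) =ᶠ[nhds (0:ℝ)] (fun _ => (0:ℝ)) := by
        filter_upwards [Metric.ball_mem_nhds (0:ℝ) (by positivity : (0:ℝ) < 1/(3*c))] with u hu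
        have : |u| < 1/(3*c) := by simpa [Real.dist_eq] using hu
        have : |u * c| ≤ 1/3 := by
          rw [abs_mul, abs_of_pos hc]
          calc |u| * c ≤ 1/(3*c) * c := by nlinarith [abs_nonneg u]
            _ = 1/3 := by field_simp
        simp [hχ0 _ this]
      simpa [hh'] using (hasDerivAt_const (0:ℝ) (0:ℝ)).congr_of_eventuallyEq this
    · have hnum : HasDerivAt (fun t : ℝ => χ (t*c)) (deriv χ (t*c) * c) t :=
        ((hχsmooth.differentiable (by simp) (t*c)).hasDerivAt).comp t
          (hasDerivAt_mul_const c)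
      have : HasDerivAt (fun t => χ (t*c) / t) ((deriv χ (t*c) * c * id t - χ (t*c) * 1) / id t ^ 2) t :=
        hnum.div (hasDerivAt_id t) ht
      convert this using 1
      simp only [hh', if_neg ht, id]
      field_simp
  have hbound : ∀ t : ℝ, |h' t| ≤ (3*B₁+9*B₀)*c^2 := by
    intro t
    by_cases ht : t = 0
    · simp only [hh', if_pos ht, abs_zero]; positivity
    · simp only [hh', if_neg ht]
      rcases le_or_gt (|t*c|) (1/3) with hsmall | hbig
      · rw [hχ0 _ hsmall, hd0 _ hsmall]
        simp; positivity
      · have ht0 : 0 < |t| := abs_pos.2 ht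
        have hinv : 1/|t| < 3*c := by
          rw [abs_mul, abs_of_pos hc] at hbig
          rw [div_lt_iff₀ ht0]
          nlinarith
        have h1 : |deriv χ (t*c) * c / t| ≤ B₁ * c * (3*c) := by
          rw [abs_div, abs_mul, abs_of_pos hc]
          calc |deriv χ (t*c)| * c / |t| ≤ B₁ * c * (1/|t|) := by
                rw [mul_one_div]
                gcongr
                exact hB₁ _
            _ ≤ B₁ * c * (3*c) := by
                apply mul_le_mul_of_nonneg_left hinv.le (by positivity)
        have h2 : |χ (t*c)/t^2| ≤ B₀ * (9*c^2) := by
          rw [abs_div, abs_pow]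
          have : (1:ℝ)/|t|^2 ≤ 9*c^2 := by
            have := mul_le_mul hinv.le hinv.le (by positivity) (by positivity)
            calc (1:ℝ)/|t|^2 = (1/|t|) * (1/|t|) := by ring
              _ ≤ (3*c)*(3*c) := this
              _ = 9*c^2 := by ring
          calc |χ (t*c)|/|t|^2 ≤ B₀ / |t|^2 := by
                gcongr
                exact hB₀ _
            _ = B₀ * (1/|t|^2) := by ring
            _ ≤ B₀ * (9*c^2) := mul_le_mul_of_nonneg_left this hB₀0
        calc |deriv χ (t*c) * c / t - χ (t*c)/t^2|
            ≤ |deriv χ (t*c) * c / t| + |χ (t*c)/t^2| := abs_sub _ _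
          _ ≤ B₁ * c * (3*c) + B₀ * (9*c^2) := add_le_add h1 h2
          _ = (3*B₁+9*B₀)*c^2 := by ring
  have := Convex.norm_image_sub_le_of_norm_hasDerivWithin_le
    (f := fun t => χ (t*c)/t) (f' := h') (C := (3*B₁+9*B₀)*c^2) (s := Set.univ)
    (fun t _ => (hderiv t).hasDerivWithinAt)
    (fun t _ => by simpa [Real.norm_eq_abs] using hbound t)
    convex_univ (Set.mem_univ y) (Set.mem_univ x)
  simpa [Real.norm_eq_abs] using this


/-- Lipschitz estimate, with respect to the constant `m`, for the regularized inverses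
`(ω·∂_φ + m ∂_x)⁻¹_{ext}` acting on traveling-wave Fourier modes: the operator multiplying
`u_{ℓ,j}` by `χ((ω·ℓ + m j) υ⁻¹ ⟨ℓ⟩^τ) / (i (ω·ℓ + m j))`, where `χ` is a smooth even cutoff
vanishing for `|ξ| ≤ 1/3` and equal to `1` for `|ξ| ≥ 2/3`, satisfies
`‖(A_{m₁} - A_{m₂}) u‖_s ≤ C υ⁻² |m₁ - m₂| ‖u‖_{s+2τ+1}` for all `s ≥ 0` (stated in squared
form on the weighted `ℓ²` norms). -/
theorem regularized_inverse_lipschitz (ν : ℕ) (jvec : Fin ν → ℤ) (τ : ℝ) (hτ : 1 ≤ τ)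
    (χ : ℝ → ℝ) (hχsmooth : ContDiff ℝ (⊤ : ℕ∞) χ) (hχeven : ∀ ξ : ℝ, χ (-ξ) = χ ξ)
    (hχ0 : ∀ ξ : ℝ, |ξ| ≤ 1 / 3 → χ ξ = 0) (hχ1 : ∀ ξ : ℝ, 2 / 3 ≤ |ξ| → χ ξ = 1) :
    ∃ C : ℝ, 0 < C ∧
      ∀ (ω : Fin ν → ℝ) (m₁ m₂ υ : ℝ), υ ∈ Set.Ioo (0 : ℝ) 1 →
      ∀ u : (Fin ν → ℤ) × ℤ → ℂ,
        (∀ p : (Fin ν → ℤ) × ℤ, u p ≠ 0 → (∑ a, jvec a * p.1 a) + p.2 = 0) →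
        ∀ s : ℝ, 0 ≤ s →
        let D : ℝ → (Fin ν → ℤ) × ℤ → ℝ :=
          fun m p => (∑ a, ω a * (p.1 a : ℝ)) + m * (p.2 : ℝ)
        let L : (Fin ν → ℤ) × ℤ → ℝ := fun p => max 1 (∑ a, (|p.1 a| : ℝ))
        let w : (Fin ν → ℤ) × ℤ → ℝ := fun p => max (L p) (|p.2| : ℝ)
        let A : ℝ → (Fin ν → ℤ) × ℤ → ℂ := fun m p =>
          ((χ (D m p * υ⁻¹ * L p ^ τ) : ℝ) / (Complex.I * (D m p : ℂ))) * u p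
        (∑' p : (Fin ν → ℤ) × ℤ, ENNReal.ofReal (w p ^ (2 * s) * ‖A m₁ p - A m₂ p‖ ^ 2))
          ≤ ENNReal.ofReal ((C * υ⁻¹ ^ 2 * |m₁ - m₂|) ^ 2) *
            ∑' p : (Fin ν → ℤ) × ℤ,
              ENNReal.ofReal (w p ^ (2 * (s + 2 * τ + 1)) * ‖u p‖ ^ 2) := by
  -- cutoff derivative facts and global bounds
  have hd_small := aux_deriv_zero_small χ hχsmooth hχ0
  have hcontd : Continuous (deriv χ) :=
    ((hχsmooth.of_le (by simp) : ContDiff ℝ 1 χ).continuous_deriv le_rfl)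
  obtain ⟨B₀, hB₀0, hB₀⟩ := aux_global_bound χ hχsmooth.continuous 1 (by norm_num)
    (fun ξ h => by rw [hχ1 ξ (le_trans (by norm_num) h.le)]; norm_num)
  obtain ⟨B₁, hB₁0, hB₁⟩ := aux_global_bound (deriv χ) hcontd 0 le_rfl
    (fun ξ h => by rw [aux_deriv_zero_large χ hχ1 ξ h]; simp)
  refine ⟨3*B₁ + 9*B₀ + 1, by positivity, ?_⟩
  intro ω m₁ m₂ υ hυ u hu s hs D L w A
  set C : ℝ := 3*B₁ + 9*B₀ + 1 with hC
  have hυ0 : 0 < υ := hυ.1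
  -- pointwise estimate
  have claim : ∀ p : (Fin ν → ℤ) × ℤ,
      w p ^ (2 * s) * ‖A m₁ p - A m₂ p‖ ^ 2
        ≤ (C * υ⁻¹ ^ 2 * |m₁ - m₂|) ^ 2 * (w p ^ (2 * (s + 2 * τ + 1)) * ‖u p‖ ^ 2) := by
    intro p
    have hL1 : (1:ℝ) ≤ L p := le_max_left _ _
    have hL0 : (0:ℝ) < L p := lt_of_lt_of_le one_pos hL1
    have hw1 : (1:ℝ) ≤ w p := le_trans hL1 (le_max_left _ _)
    have hw0 : (0:ℝ) < w p := lt_of_lt_of_le one_pos hw1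
    have hLw : L p ≤ w p := le_max_left _ _
    have hjw : |(p.2:ℝ)| ≤ w p := le_max_right _ _
    set c : ℝ := υ⁻¹ * L p ^ τ with hc_def
    have hc : 0 < c := by
      have : (0:ℝ) < L p ^ τ := Real.rpow_pos_of_pos hL0 τ
      positivity
    -- rewrite A
    have hA : ∀ m, A m p = ((χ (D m p * c) / D m p : ℝ) : ℂ) * (-Complex.I) * u p := by
      intro m
      show ((χ (D m p * υ⁻¹ * L p ^ τ) : ℝ) : ℂ) / (Complex.I * (D m p : ℂ)) * u p = _
      rw [mul_assoc, ← hc_def]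
      by_cases hd : D m p = 0
      · rw [hd]
        have h0 : χ ((0:ℝ) * c) = 0 := by
          rw [zero_mul]; exact hχ0 0 (by norm_num)
        simp [h0]
      · have hd' : ((D m p : ℝ):ℂ) ≠ 0 := by exact_mod_cast hd
        congr 1
        push_cast
        field_simp
        ring_nf
        simp [Complex.I_sq]
    -- norm of the difference
    have hdiff : ‖A m₁ p - A m₂ p‖
        = |χ (D m₁ p * c) / D m₁ p - χ (D m₂ p * c) / D m₂ p| * ‖u p‖ := by
      rw [hA m₁, hA m₂, ← sub_mul, ← sub_mul, ← Complex.ofReal_sub]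
      rw [norm_mul, norm_mul, Complex.norm_real, norm_neg, Complex.norm_I, mul_one,
        Real.norm_eq_abs]
    have hlip := aux_lip χ hχsmooth hχ0 B₀ B₁ hB₀ hB₁ hd_small c hc (D m₁ p) (D m₂ p)
    have hDsub : D m₁ p - D m₂ p = (m₁ - m₂) * (p.2:ℝ) := by
      show ((∑ a, ω a * (p.1 a : ℝ)) + m₁ * (p.2 : ℝ))
        - ((∑ a, ω a * (p.1 a : ℝ)) + m₂ * (p.2 : ℝ)) = _
      ring
    -- key scalar bound: c^2 * |p.2| ≤ υ⁻¹^2 * w p ^ (2*τ+1)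
    have hkey : c^2 * |(p.2:ℝ)| ≤ υ⁻¹^2 * w p ^ (2*τ + 1) := by
      have h1 : (L p ^ τ)^2 * |(p.2:ℝ)| ≤ w p ^ (2*τ + 1) := by
        have e1 : (L p ^ τ)^2 = L p ^ (2*τ) := by
          rw [← Real.rpow_natCast (L p ^ τ) 2, ← Real.rpow_mul hL0.le]
          norm_num; ring_nf
        have e2 : L p ^ (2*τ) ≤ w p ^ (2*τ) :=
          Real.rpow_le_rpow hL0.le hLw (by linarith)
        have e3 : w p ^ (2*τ) * |(p.2:ℝ)| ≤ w p ^ (2*τ) * w p := by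
          apply mul_le_mul_of_nonneg_left hjw (Real.rpow_nonneg hw0.le _)
        have e4 : w p ^ (2*τ) * w p = w p ^ (2*τ + 1) := by
          rw [Real.rpow_add hw0, Real.rpow_one]
        calc (L p ^ τ)^2 * |(p.2:ℝ)| ≤ w p ^ (2*τ) * |(p.2:ℝ)| := by
              rw [e1]; exact mul_le_mul_of_nonneg_right e2 (abs_nonneg _)
          _ ≤ w p ^ (2*τ + 1) := by rw [← e4]; exact e3
      calc c^2 * |(p.2:ℝ)| = υ⁻¹^2 * ((L p ^ τ)^2 * |(p.2:ℝ)|) := by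
            rw [hc_def]; ring
        _ ≤ υ⁻¹^2 * w p ^ (2*τ + 1) := by
            apply mul_le_mul_of_nonneg_left h1 (by positivity)
    -- norm bound
    have hnorm : ‖A m₁ p - A m₂ p‖
        ≤ (C * υ⁻¹^2 * |m₁ - m₂|) * (w p ^ (2*τ + 1) * ‖u p‖) := by
      rw [hdiff]
      have h2 : |χ (D m₁ p * c) / D m₁ p - χ (D m₂ p * c) / D m₂ p|
          ≤ (3*B₁+9*B₀) * c^2 * (|m₁ - m₂| * |(p.2:ℝ)|) := by
        calc _ ≤ (3*B₁+9*B₀)*c^2 * |D m₁ p - D m₂ p| := hlip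
          _ = (3*B₁+9*B₀)*c^2 * (|m₁ - m₂| * |(p.2:ℝ)|) := by
              rw [hDsub, abs_mul]
      have h3 : (3*B₁+9*B₀) * c^2 * (|m₁ - m₂| * |(p.2:ℝ)|)
          ≤ C * υ⁻¹^2 * |m₁ - m₂| * w p ^ (2*τ + 1) := by
        have : (3*B₁+9*B₀) * (c^2 * |(p.2:ℝ)|) ≤ C * (υ⁻¹^2 * w p ^ (2*τ + 1)) := by
          apply mul_le_mul (by rw [hC]; linarith) hkey (by positivity)
          rw [hC]; positivity
        calc (3*B₁+9*B₀) * c^2 * (|m₁ - m₂| * |(p.2:ℝ)|)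
            = ((3*B₁+9*B₀) * (c^2 * |(p.2:ℝ)|)) * |m₁ - m₂| := by ring
          _ ≤ (C * (υ⁻¹^2 * w p ^ (2*τ + 1))) * |m₁ - m₂| :=
              mul_le_mul_of_nonneg_right this (abs_nonneg _)
          _ = C * υ⁻¹^2 * |m₁ - m₂| * w p ^ (2*τ + 1) := by ring
      calc |χ (D m₁ p * c) / D m₁ p - χ (D m₂ p * c) / D m₂ p| * ‖u p‖
          ≤ (C * υ⁻¹^2 * |m₁ - m₂| * w p ^ (2*τ + 1)) * ‖u p‖ :=
            mul_le_mul_of_nonneg_right (h2.trans h3) (norm_nonneg _)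
        _ = (C * υ⁻¹^2 * |m₁ - m₂|) * (w p ^ (2*τ + 1) * ‖u p‖) := by ring
    -- square it
    have hK0 : 0 ≤ C * υ⁻¹^2 * |m₁ - m₂| := by rw [hC]; positivity
    have hsq : ‖A m₁ p - A m₂ p‖^2
        ≤ ((C * υ⁻¹^2 * |m₁ - m₂|) * (w p ^ (2*τ + 1) * ‖u p‖))^2 :=
      pow_le_pow_left₀ (norm_nonneg _) hnorm 2
    have hexp : w p ^ (2*s) * (w p ^ (2*τ + 1))^2 = w p ^ (2 * (s + 2*τ + 1)) := by
      rw [← Real.rpow_natCast (w p ^ (2*τ+1)) 2, ← Real.rpow_mul hw0.le,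
        ← Real.rpow_add hw0]
      norm_num; ring_nf
    calc w p ^ (2*s) * ‖A m₁ p - A m₂ p‖^2
        ≤ w p ^ (2*s) * ((C * υ⁻¹^2 * |m₁ - m₂|) * (w p ^ (2*τ + 1) * ‖u p‖))^2 :=
          mul_le_mul_of_nonneg_left hsq (Real.rpow_nonneg hw0.le _)
      _ = (C * υ⁻¹^2 * |m₁ - m₂|)^2 * ((w p ^ (2*s) * (w p ^ (2*τ + 1))^2) * ‖u p‖^2) := by
          ring
      _ = (C * υ⁻¹^2 * |m₁ - m₂|)^2 * (w p ^ (2 * (s + 2*τ + 1)) * ‖u p‖^2) := by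
          rw [hexp]
  -- sum up
  calc (∑' p : (Fin ν → ℤ) × ℤ, ENNReal.ofReal (w p ^ (2 * s) * ‖A m₁ p - A m₂ p‖ ^ 2))
      ≤ ∑' p : (Fin ν → ℤ) × ℤ, ENNReal.ofReal ((C * υ⁻¹ ^ 2 * |m₁ - m₂|) ^ 2 *
          (w p ^ (2 * (s + 2 * τ + 1)) * ‖u p‖ ^ 2)) :=
        ENNReal.tsum_le_tsum (fun p => ENNReal.ofReal_le_ofReal (claim p))
    _ = ∑' p : (Fin ν → ℤ) × ℤ, ENNReal.ofReal ((C * υ⁻¹ ^ 2 * |m₁ - m₂|) ^ 2) *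
          ENNReal.ofReal (w p ^ (2 * (s + 2 * τ + 1)) * ‖u p‖ ^ 2) := by
        congr 1; funext p
        rw [ENNReal.ofReal_mul (by positivity)]
    _ = ENNReal.ofReal ((C * υ⁻¹ ^ 2 * |m₁ - m₂|) ^ 2) *
          ∑' p : (Fin ν → ℤ) × ℤ,
            ENNReal.ofReal (w p ^ (2 * (s + 2 * τ + 1)) * ‖u p‖ ^ 2) :=
        ENNReal.tsum_mul_left
end

section
/- Let (N_n)_{n≥0} with N_n = N_0^{(3/2)^n}, N_{-1} = 1, and let m_1^{(n)} be real constants (depending on tori i_1, i_2) with |m_1^{(n)}(i_1) - m_1^{(n)}(i_2)| ≤ C ε ||i_1 - i_2||. Define, for ȷ⃗ ∈ ℤ^ν, the sets T_{n+1}(2υ, τ)(i) = { (ω, γ) : |(ω - m_1^{(n)}(i) ȷ⃗)·ℓ| ≥ 2υ ⟨ℓ⟩^{-τ} for all 0 < |ℓ| ≤ N_n }. If C ε N_n^{τ+1} ||i_1 - i_2|| ≤ ρ with 0 < 2υ - ρ < 2υ < 1, then T_{n+1}(2υ, τ)(i_1) ⊆ T_{n+1}(2υ - ρ, τ)(i_2).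 -/
/-! Moving `m` from `m₁` to `m₂` shifts the small divisor `(ω - m ȷ⃗)·ℓ` by `(m₁ - m₂) ȷ⃗·ℓ`, which
is at most `|m₁ - m₂| ‖ȷ⃗‖₁ ⟨ℓ⟩`. Since `⟨ℓ⟩ ≤ N`, the smallness condition
`|m₁ - m₂| ‖ȷ⃗‖₁ N^{τ+1} ≤ ρ` makes this shift at most `ρ ⟨ℓ⟩^{-τ}`, so the non-resonance constant
drops by at most `ρ`. -/

open Finset

/-- The paper's `T_{n+1}(γ, τ)(i)`, with `N = N_n`, `m = m₁⁽ⁿ⁾(i)` and `⟨ℓ⟩ = max 1 ‖ℓ‖₁`. -/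
def transportNonresonant {ι : Type*} [Fintype ι] (j : ι → ℤ) (m γ τ N : ℝ) : Set (ι → ℝ) :=
  {ω | ∀ ℓ : ι → ℤ, ℓ ≠ 0 → (∑ a, (|ℓ a| : ℝ)) ≤ N →
    γ * (max 1 (∑ a, (|ℓ a| : ℝ))) ^ (-τ) ≤ |∑ a, (ω a - m * (j a : ℝ)) * (ℓ a : ℝ)|}

theorem abs_sum_mul_le_sum_abs_mul_sum_abs {ι : Type*} (s : Finset ι) (f g : ι → ℝ) :
    |∑ a ∈ s, f a * g a| ≤ (∑ a ∈ s, |f a|) * ∑ b ∈ s, |g b| := by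
  calc |∑ a ∈ s, f a * g a|
      ≤ ∑ a ∈ s, |f a| * |g a| := by
        simpa only [abs_mul] using abs_sum_le_sum_abs (fun a => f a * g a) s
    _ ≤ ∑ a ∈ s, |f a| * ∑ b ∈ s, |g b| := by
        gcongr with a ha
        exact single_le_sum (fun b _ => abs_nonneg (g b)) ha
    _ = (∑ a ∈ s, |f a|) * ∑ b ∈ s, |g b| := (sum_mul _ _ _).symm

theorem mul_le_mul_rpow_neg_of_mul_rpow_add_one_le {a L ρ τ : ℝ} (hL : 0 < L)
    (h : a * L ^ (τ + 1) ≤ ρ) : a * L ≤ ρ * L ^ (-τ) := by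
  have hsplit : a * L = a * L ^ (τ + 1) * L ^ (-τ) := by
    rw [mul_assoc, ← Real.rpow_add hL, add_neg_cancel_comm, Real.rpow_one]
  rw [hsplit]
  exact mul_le_mul_of_nonneg_right h (Real.rpow_nonneg hL.le _)

theorem transportNonresonant_subset {ι : Type*} [Fintype ι] (j : ι → ℤ) {m₁ m₂ γ ρ τ N : ℝ}
    (hτ : 0 ≤ τ) (hN : 1 ≤ N)
    (hsmall : |m₁ - m₂| * (∑ a, (|j a| : ℝ)) * N ^ (τ + 1) ≤ ρ) :
    transportNonresonant j m₁ γ τ N ⊆ transportNonresonant j m₂ (γ - ρ) τ N := by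
  intro ω hω ℓ hℓ hℓN
  set L := max 1 (∑ a, (|ℓ a| : ℝ))
  have hL : 0 < L := lt_of_lt_of_le one_pos (le_max_left _ _)
  have hdot : |∑ a, (j a : ℝ) * (ℓ a : ℝ)| ≤ (∑ a, (|j a| : ℝ)) * L :=
    (abs_sum_mul_le_sum_abs_mul_sum_abs _ _ _).trans
      (mul_le_mul_of_nonneg_left (le_max_right _ _) (sum_nonneg fun a _ => abs_nonneg _))
  have hshift : |(m₁ - m₂) * ∑ a, (j a : ℝ) * (ℓ a : ℝ)| ≤ ρ * L ^ (-τ) := by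
    rw [abs_mul]
    calc |m₁ - m₂| * |∑ a, (j a : ℝ) * (ℓ a : ℝ)|
        ≤ |m₁ - m₂| * (∑ a, (|j a| : ℝ)) * L := by
          rw [mul_assoc]; exact mul_le_mul_of_nonneg_left hdot (abs_nonneg _)
      _ ≤ ρ * L ^ (-τ) := by
        refine mul_le_mul_rpow_neg_of_mul_rpow_add_one_le hL (le_trans ?_ hsmall)
        gcongr
        exact max_le hN hℓN
  have hsplit : ∑ a, (ω a - m₂ * (j a : ℝ)) * (ℓ a : ℝ)
      = ∑ a, (ω a - m₁ * (j a : ℝ)) * (ℓ a : ℝ) + (m₁ - m₂) * ∑ a, (j a : ℝ) * (ℓ a : ℝ) := by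
    rw [mul_sum, ← sum_add_distrib]
    exact sum_congr rfl fun a _ => by ring
  calc (γ - ρ) * L ^ (-τ)
      = γ * L ^ (-τ) - ρ * L ^ (-τ) := sub_mul _ _ _
    _ ≤ |∑ a, (ω a - m₁ * (j a : ℝ)) * (ℓ a : ℝ)|
          - |(m₁ - m₂) * ∑ a, (j a : ℝ) * (ℓ a : ℝ)| := sub_le_sub (hω ℓ hℓ hℓN) hshift
    _ ≤ |∑ a, (ω a - m₂ * (j a : ℝ)) * (ℓ a : ℝ)| := hsplit ▸ abs_sub_abs_le_abs_add _ _

theorem cantor_set_inclusion_general (ν : ℕ) (jvec : Fin ν → ℤ)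
    (τ υ ρ ε C K d N m₁ m₂ : ℝ)
    (hτ : 1 ≤ τ) (hN : 1 ≤ N)
    (hK : ∑ a, (|jvec a| : ℝ) ≤ K)
    (hLip : |m₁ - m₂| ≤ C * ε * d)
    (hsmall : K * (C * ε) * N ^ (τ + 1) * d ≤ ρ) :
    ∀ ω : Fin ν → ℝ,
      (∀ ℓ : Fin ν → ℤ, ℓ ≠ 0 → (∑ a, (|ℓ a| : ℝ)) ≤ N →
        2 * υ * (max 1 (∑ a, (|ℓ a| : ℝ))) ^ (-τ)
          ≤ |∑ a, (ω a - m₁ * (jvec a : ℝ)) * (ℓ a : ℝ)|) →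
      (∀ ℓ : Fin ν → ℤ, ℓ ≠ 0 → (∑ a, (|ℓ a| : ℝ)) ≤ N →
        (2 * υ - ρ) * (max 1 (∑ a, (|ℓ a| : ℝ))) ^ (-τ)
          ≤ |∑ a, (ω a - m₂ * (jvec a : ℝ)) * (ℓ a : ℝ)|) := by
  have hj : 0 ≤ ∑ a, (|jvec a| : ℝ) := sum_nonneg fun a _ => abs_nonneg _
  have hNτ : 0 ≤ N ^ (τ + 1) := Real.rpow_nonneg (by linarith) _
  have hjump : |m₁ - m₂| * (∑ a, (|jvec a| : ℝ)) * N ^ (τ + 1) ≤ ρ :=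
    calc |m₁ - m₂| * (∑ a, (|jvec a| : ℝ)) * N ^ (τ + 1)
        ≤ C * ε * d * K * N ^ (τ + 1) := by gcongr; exact (abs_nonneg _).trans hLip
      _ = K * (C * ε) * N ^ (τ + 1) * d := by ring
      _ ≤ ρ := hsmall
  exact transportNonresonant_subset (γ := 2 * υ) jvec (by linarith) hN hjump

/-- Inclusion of the transport non-resonance Cantor-like sets for nearby approximate solutions:
if the constants `m₁ = m₁⁽ⁿ⁾(i₁)` and `m₂ = m₁⁽ⁿ⁾(i₂)` satisfy `|m₁ - m₂| ≤ C ε d` with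
`d = ‖i₁ - i₂‖`, and `C ε N^{τ+1} d ≤ ρ` with `0 < 2υ - ρ < 2υ < 1`, then every `ω` satisfying
`|(ω - m₁ ȷ⃗)·ℓ| ≥ 2υ ⟨ℓ⟩^{-τ}` for all `0 < |ℓ| ≤ N` also satisfies
`|(ω - m₂ ȷ⃗)·ℓ| ≥ (2υ - ρ) ⟨ℓ⟩^{-τ}` for all `0 < |ℓ| ≤ N` (the constant `C` absorbs the
size of `ȷ⃗`, encoded by `K`). -/
theorem cantor_set_inclusion (ν : ℕ) (jvec : Fin ν → ℤ)
    (τ υ ρ ε C K d N m₁ m₂ : ℝ)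
    (hτ : 1 ≤ τ) (hN : 1 ≤ N)
    (hυ : 2 * υ < 1) (hρ : 0 < 2 * υ - ρ)
    (hd : 0 ≤ d)
    (hK : ∑ a, (|jvec a| : ℝ) ≤ K)
    (hLip : |m₁ - m₂| ≤ C * ε * d)
    (hsmall : K * (C * ε) * N ^ (τ + 1) * d ≤ ρ) :
    ∀ ω : Fin ν → ℝ,
      (∀ ℓ : Fin ν → ℤ, ℓ ≠ 0 → (∑ a, (|ℓ a| : ℝ)) ≤ N →
        2 * υ * (max 1 (∑ a, (|ℓ a| : ℝ))) ^ (-τ)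
          ≤ |∑ a, (ω a - m₁ * (jvec a : ℝ)) * (ℓ a : ℝ)|) →
      (∀ ℓ : Fin ν → ℤ, ℓ ≠ 0 → (∑ a, (|ℓ a| : ℝ)) ≤ N →
        (2 * υ - ρ) * (max 1 (∑ a, (|ℓ a| : ℝ))) ^ (-τ)
          ≤ |∑ a, (ω a - m₂ * (jvec a : ℝ)) * (ℓ a : ℝ)|) :=
  cantor_set_inclusion_general ν jvec τ υ ρ ε C K d N m₁ m₂ hτ hN hK hLip hsmall
end
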